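/- Consider N agents over a finite horizon of τ time steps. Agent i has states x_t^i ∈ ℝ^{n_i} and controls u_t^i ∈ ℝ^{m_i} for 0 ≤ t ≤ τ, continuously differentiable dynamics f^i : ℝ^{n_i} × ℝ^{m_i} → ℝ^{n_i}, reference states x̂_t^i ∈ ℝ^{n_i}, positive semidefinite matrices Q^i and Q_τ^i, and a positive definite matrix R^i. Let g : ℝ^n × ℝ^m → ℝ^c (with n = Σ n_i, m = Σ m_i) be a continuously differentiable joint constraint function, and let Q = blkdiag(Q^1,…,Q^N), Q_τ = blkdiag(Q_τ^1,…,Q_τ^N), R = blkdiag(R^1,…,R^N). Suppose the joint trajectory {x*_{0:τ}, u*_{0:τ}} satisfies x*_0 = x̂_0, the joint dynamics x*_{t+1} = f(x*_t, u*_t) for 0 ≤ t ≤ τ−1, the constraints g(x*_t, u*_t) ≤ 0 for 0 ≤ t ≤ τ, and is a local minimizer (within some ε-neighborhood in the sum-of-squared-distances sense) of the potential cost (x_τ − x̂_τ)ᵀQ_τ(x_τ − x̂_τ) + Σ_{t=0}^{τ−1} (x_t − x̂_t)ᵀQ(x_t − x̂_t) + Σ_{t=0}^{τ} u_tᵀR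 u_t over all joint trajectories satisfying the initial condition, joint dynamics, and constraints. Then {x*_{0:τ}, u*_{0:τ}} is a local generalized Nash equilibrium: there exists ε > 0 such that for every agent i, the trajectory {x*^i_{0:τ}, u*^i_{0:τ}} minimizes (x_τ^i − x̂_τ^i)ᵀQ_τ^i(x_τ^i − x̂_τ^i) + Σ_{t=0}^{τ−1} (x_t^i − x̂_t^i)ᵀQ^i(x_t^i − x̂_t^i) + Σ_{t=0}^{τ} (u_t^i)ᵀR^i u_t^i among all trajectories {x^i_{0:τ}, u^i_{0:τ}} satisfying x_0^i = x̂_0^i, x_{t+1}^i = f^i(x_t^i, u_t^i), the joint constraints g ≤ 0 evaluated with all other agents' variables fixed at their starred values, and lying within ε of the starred joint trajectory. -/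
import Mathlib

open Matrix

private lemma sum_update_eq {N : ℕ} {β : Fin N → Type*} (v : (j : Fin N) → β j)
    (i : Fin N) (a : β i) (F : (j : Fin N) → β j → ℝ) :
    ∑ j, F j (Function.update v i a j) =
      F i a + ∑ j ∈ Finset.univ.erase i, F j (v j) := by
  rw [← Finset.add_sum_erase _ _ (Finset.mem_univ i)]
  congr 1
  · rw [Function.update_self]
  · exact Finset.sum_congr rfl fun j hj =>
      congrArg _ (Function.update_of_ne (Finset.ne_of_mem_erase hj) _ _)

/-- Constrained potential trajectory games: if a feasible joint trajectory
`(xs, us)` is a local minimizer (in the sum-of-squared-distances sense) of the joint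
potential cost — the sum over agents of the quadratic tracking/control costs with
block-diagonal weights `Q = blkdiag(Qⁱ)`, `Q_τ = blkdiag(Q_τⁱ)`, `R = blkdiag(Rⁱ)` —
over joint trajectories satisfying the initial condition, the joint dynamics, and the
joint constraints `g ≤ 0`, then it is a local generalized Nash equilibrium: no agent `i`
can reduce its own cost by unilaterally switching to a nearby trajectory satisfying its
own dynamics and the joint constraints with the other agents' trajectories held fixed. -/
theorem potential_local_minimizer_is_local_GNE_trajectory
    (N τ c : ℕ)
    (n m : Fin N → ℕ)
    (f : (i : Fin N) → (Fin (n i) → ℝ) → (Fin (m i) → ℝ) → (Fin (n i) → ℝ))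
    (hf : ∀ i, ContDiff ℝ 1 (fun p : (Fin (n i) → ℝ) × (Fin (m i) → ℝ) => f i p.1 p.2))
    (g : ((i : Fin N) → Fin (n i) → ℝ) → ((i : Fin N) → Fin (m i) → ℝ) → (Fin c → ℝ))
    (hg : ContDiff ℝ 1
      (fun p : ((i : Fin N) → Fin (n i) → ℝ) × ((i : Fin N) → Fin (m i) → ℝ) =>
        g p.1 p.2))
    (xhat : Fin (τ + 1) → (i : Fin N) → Fin (n i) → ℝ)
    (Q Qτ : (i : Fin N) → Matrix (Fin (n i)) (Fin (n i)) ℝ)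
    (R : (i : Fin N) → Matrix (Fin (m i)) (Fin (m i)) ℝ)
    (hQ : ∀ i, (Q i).PosSemidef) (hQτ : ∀ i, (Qτ i).PosSemidef)
    (hR : ∀ i, (R i).PosDef)
    (xs : Fin (τ + 1) → (i : Fin N) → Fin (n i) → ℝ)
    (us : Fin (τ + 1) → (i : Fin N) → Fin (m i) → ℝ)
    -- feasibility of the candidate joint trajectory
    (hinit : xs 0 = xhat 0)
    (hdyn : ∀ (t : Fin τ) (i : Fin N),
      xs t.succ i = f i (xs t.castSucc i) (us t.castSucc i))
    (hcon : ∀ (t : Fin (τ + 1)) (k : Fin c), g (xs t) (us t) k ≤ 0)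
    -- `(xs, us)` is a local minimizer of the joint potential cost over feasible
    -- joint trajectories
    (hmin : ∃ ε > 0, ∀ (xs' : Fin (τ + 1) → (i : Fin N) → Fin (n i) → ℝ)
        (us' : Fin (τ + 1) → (i : Fin N) → Fin (m i) → ℝ),
        xs' 0 = xhat 0 →
        (∀ (t : Fin τ) (i : Fin N),
          xs' t.succ i = f i (xs' t.castSucc i) (us' t.castSucc i)) →
        (∀ (t : Fin (τ + 1)) (k : Fin c), g (xs' t) (us' t) k ≤ 0) →
        (∑ t : Fin (τ + 1),
          ((∑ i, ∑ j, (xs' t i j - xs t i j) ^ 2) +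
           (∑ i, ∑ j, (us' t i j - us t i j) ^ 2))) ≤ ε →
        ((∑ i, (xs (Fin.last τ) i - xhat (Fin.last τ) i) ⬝ᵥ
            (Qτ i) *ᵥ (xs (Fin.last τ) i - xhat (Fin.last τ) i))
          + (∑ t : Fin τ, ∑ i, (xs t.castSucc i - xhat t.castSucc i) ⬝ᵥ
              (Q i) *ᵥ (xs t.castSucc i - xhat t.castSucc i))
          + (∑ t : Fin (τ + 1), ∑ i, (us t i) ⬝ᵥ (R i) *ᵥ (us t i)))
        ≤ ((∑ i, (xs' (Fin.last τ) i - xhat (Fin.last τ) i) ⬝ᵥ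
            (Qτ i) *ᵥ (xs' (Fin.last τ) i - xhat (Fin.last τ) i))
          + (∑ t : Fin τ, ∑ i, (xs' t.castSucc i - xhat t.castSucc i) ⬝ᵥ
              (Q i) *ᵥ (xs' t.castSucc i - xhat t.castSucc i))
          + (∑ t : Fin (τ + 1), ∑ i, (us' t i) ⬝ᵥ (R i) *ᵥ (us' t i)))) :
    -- conclusion: `(xs, us)` is a local generalized Nash equilibrium trajectory
    ∃ ε > 0, ∀ (i : Fin N) (xi : Fin (τ + 1) → Fin (n i) → ℝ)
        (ui : Fin (τ + 1) → Fin (m i) → ℝ),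
        xi 0 = xhat 0 i →
        (∀ t : Fin τ, xi t.succ = f i (xi t.castSucc) (ui t.castSucc)) →
        (∀ (t : Fin (τ + 1)) (k : Fin c),
          g (Function.update (xs t) i (xi t)) (Function.update (us t) i (ui t)) k ≤ 0) →
        (∑ t : Fin (τ + 1),
          ((∑ j, (xi t j - xs t i j) ^ 2) + (∑ j, (ui t j - us t i j) ^ 2))) ≤ ε →
        ((xs (Fin.last τ) i - xhat (Fin.last τ) i) ⬝ᵥ
            (Qτ i) *ᵥ (xs (Fin.last τ) i - xhat (Fin.last τ) i)
          + (∑ t : Fin τ, (xs t.castSucc i - xhat t.castSucc i) ⬝ᵥ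
              (Q i) *ᵥ (xs t.castSucc i - xhat t.castSucc i))
          + (∑ t : Fin (τ + 1), (us t i) ⬝ᵥ (R i) *ᵥ (us t i)))
        ≤ ((xi (Fin.last τ) - xhat (Fin.last τ) i) ⬝ᵥ
            (Qτ i) *ᵥ (xi (Fin.last τ) - xhat (Fin.last τ) i)
          + (∑ t : Fin τ, (xi t.castSucc - xhat t.castSucc i) ⬝ᵥ
              (Q i) *ᵥ (xi t.castSucc - xhat t.castSucc i))
          + (∑ t : Fin (τ + 1), (ui t) ⬝ᵥ (R i) *ᵥ (ui t))) := by
  obtain ⟨ε, hε, hmin⟩ := hmin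
  refine ⟨ε, hε, fun i xi ui h0 hidyn hicon hdist => ?_⟩
  set xs' : Fin (τ + 1) → (j : Fin N) → Fin (n j) → ℝ :=
    fun t => Function.update (xs t) i (xi t) with hxs'
  set us' : Fin (τ + 1) → (j : Fin N) → Fin (m j) → ℝ :=
    fun t => Function.update (us t) i (ui t) with hus'
  have hinit' : xs' 0 = xhat 0 := by
    simp only [hxs', hinit, h0, Function.update_eq_self]
  have hdyn' : ∀ (t : Fin τ) (j : Fin N),
      xs' t.succ j = f j (xs' t.castSucc j) (us' t.castSucc j) := by
    intro t j
    by_cases hj : j = i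
    · subst hj
      simp only [hxs', hus', Function.update_self]
      exact hidyn t
    · simp only [hxs', hus', Function.update_of_ne hj]
      exact hdyn t j
  have hcon' : ∀ (t : Fin (τ + 1)) (k : Fin c), g (xs' t) (us' t) k ≤ 0 := hicon
  have hdist' : (∑ t : Fin (τ + 1),
      ((∑ j, ∑ l, (xs' t j l - xs t j l) ^ 2) +
       (∑ j, ∑ l, (us' t j l - us t j l) ^ 2))) ≤ ε := by
    refine le_trans (le_of_eq ?_) hdist
    refine Finset.sum_congr rfl fun t _ => ?_
    congr 1
    · rw [Finset.sum_eq_single i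
        (fun j _ hj => by simp [hxs', Function.update_of_ne hj])
        (fun h => absurd (Finset.mem_univ i) h)]
      simp [hxs']
    · rw [Finset.sum_eq_single i
        (fun j _ hj => by simp [hus', Function.update_of_ne hj])
        (fun h => absurd (Finset.mem_univ i) h)]
      simp [hus']
  have hjoint := hmin xs' us' hinit' hdyn' hcon' hdist'
  -- decompose both sides into agent i part + rest
  have hτ' : (∑ j, (xs' (Fin.last τ) j - xhat (Fin.last τ) j) ⬝ᵥ
        (Qτ j) *ᵥ (xs' (Fin.last τ) j - xhat (Fin.last τ) j)) =
      (xi (Fin.last τ) - xhat (Fin.last τ) i) ⬝ᵥ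
        (Qτ i) *ᵥ (xi (Fin.last τ) - xhat (Fin.last τ) i)
      + ∑ j ∈ Finset.univ.erase i, (xs (Fin.last τ) j - xhat (Fin.last τ) j) ⬝ᵥ
        (Qτ j) *ᵥ (xs (Fin.last τ) j - xhat (Fin.last τ) j) :=
    sum_update_eq (xs (Fin.last τ)) i (xi (Fin.last τ))
      (fun j v => (v - xhat (Fin.last τ) j) ⬝ᵥ (Qτ j) *ᵥ (v - xhat (Fin.last τ) j))
  have hτ0 : (∑ j, (xs (Fin.last τ) j - xhat (Fin.last τ) j) ⬝ᵥ
        (Qτ j) *ᵥ (xs (Fin.last τ) j - xhat (Fin.last τ) j)) =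
      (xs (Fin.last τ) i - xhat (Fin.last τ) i) ⬝ᵥ
        (Qτ i) *ᵥ (xs (Fin.last τ) i - xhat (Fin.last τ) i)
      + ∑ j ∈ Finset.univ.erase i, (xs (Fin.last τ) j - xhat (Fin.last τ) j) ⬝ᵥ
        (Qτ j) *ᵥ (xs (Fin.last τ) j - xhat (Fin.last τ) j) := by
    rw [← Finset.add_sum_erase _ _ (Finset.mem_univ i)]
  have hQ' : ∀ t : Fin τ, (∑ j, (xs' t.castSucc j - xhat t.castSucc j) ⬝ᵥ
        (Q j) *ᵥ (xs' t.castSucc j - xhat t.castSucc j)) =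
      (xi t.castSucc - xhat t.castSucc i) ⬝ᵥ
        (Q i) *ᵥ (xi t.castSucc - xhat t.castSucc i)
      + ∑ j ∈ Finset.univ.erase i, (xs t.castSucc j - xhat t.castSucc j) ⬝ᵥ
        (Q j) *ᵥ (xs t.castSucc j - xhat t.castSucc j) := fun t =>
    sum_update_eq (xs t.castSucc) i (xi t.castSucc)
      (fun j v => (v - xhat t.castSucc j) ⬝ᵥ (Q j) *ᵥ (v - xhat t.castSucc j))
  have hQ0 : ∀ t : Fin τ, (∑ j, (xs t.castSucc j - xhat t.castSucc j) ⬝ᵥ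
        (Q j) *ᵥ (xs t.castSucc j - xhat t.castSucc j)) =
      (xs t.castSucc i - xhat t.castSucc i) ⬝ᵥ
        (Q i) *ᵥ (xs t.castSucc i - xhat t.castSucc i)
      + ∑ j ∈ Finset.univ.erase i, (xs t.castSucc j - xhat t.castSucc j) ⬝ᵥ
        (Q j) *ᵥ (xs t.castSucc j - xhat t.castSucc j) := fun t => by
    rw [← Finset.add_sum_erase _ _ (Finset.mem_univ i)]
  have hR' : ∀ t : Fin (τ + 1), (∑ j, (us' t j) ⬝ᵥ (R j) *ᵥ (us' t j)) =
      (ui t) ⬝ᵥ (R i) *ᵥ (ui t)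
      + ∑ j ∈ Finset.univ.erase i, (us t j) ⬝ᵥ (R j) *ᵥ (us t j) := fun t =>
    sum_update_eq (us t) i (ui t) (fun j v => v ⬝ᵥ (R j) *ᵥ v)
  have hR0 : ∀ t : Fin (τ + 1), (∑ j, (us t j) ⬝ᵥ (R j) *ᵥ (us t j)) =
      (us t i) ⬝ᵥ (R i) *ᵥ (us t i)
      + ∑ j ∈ Finset.univ.erase i, (us t j) ⬝ᵥ (R j) *ᵥ (us t j) := fun t => by
    rw [← Finset.add_sum_erase _ _ (Finset.mem_univ i)]
  rw [hτ', hτ0, Finset.sum_congr rfl (fun t _ => hQ' t),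
    Finset.sum_congr rfl (fun t _ => hQ0 t),
    Finset.sum_congr rfl (fun t _ => hR' t),
    Finset.sum_congr rfl (fun t _ => hR0 t)] at hjoint
  simp only [Finset.sum_add_distrib] at hjoint
  linarith
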